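/- arXiv:2202.04116 — 7 statements merged into one kernel-verified Lean document; each statement's English description precedes it below -/
import Mathlib

section
/- Let n ≥ 2 and let a_0, a_1, …, a_{n−1} be real numbers with a_{j−1} ≠ a_j for all j ∈ {1,…,n−1} and a_{n−1} ≠ 0. Then the n×n L-matrix A_n with entries (A_n)_{i,j} = a_{max(i,j)} is invertible, and its inverse is the symmetric tridiagonal matrix with (A_n^{−1})_{0,0} = b_0, (A_n^{−1})_{j,j} = b_{j−1} + b_j for 1 ≤ j ≤ n−2, (A_n^{−1})_{n−1,n−1} = (a_{n−2}/a_{n−1}) b_{n−2}, (A_n^{−1})_{j,j+1} = (A_n^{−1})_{j+1,j} = −b_j for 0 ≤ j ≤ n−2, and all other entries zero, where b_j := 1/(a_j − a_{j+1}). -/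
/-!
Put `d k := a k - a (k + 1)`, with `a n` read as `0`, so that `a (max i j) = ∑_{m ≥ max i j} d m`.
In other words `A = U D Uᵀ`, where `U` is the upper triangular matrix of ones and `D = diag d`.
The inverse of `U` is the bidiagonal matrix `1 - S`, `S` being the superdiagonal shift, hence
`A⁻¹ = (1 - S)ᵀ D⁻¹ (1 - S)`, which is tridiagonal with the entries of the statement.
Concretely it suffices that `A (1 - S)ᵀ = U D` and `U (1 - S) = 1`.
-/

open Matrix

namespace Fin

variable {K : Type*} [AddCommMonoid K] {n : ℕ}

theorem sum_ite_val_eq (f : ℕ → K) (c : ℕ) :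
    ∑ m : Fin n, (if (m : ℕ) = c then f m else 0) = if c < n then f c else 0 := by
  rw [Fin.sum_univ_eq_sum_range (fun m => if m = c then f m else 0), Finset.sum_ite_eq']
  simp only [Finset.mem_range]

theorem sum_ite_val_add_one_eq (f : ℕ → K) (c : ℕ) :
    ∑ m : Fin n, (if (m : ℕ) + 1 = c then f m else 0) =
      if 0 < c ∧ c - 1 < n then f (c - 1) else 0 := by
  rcases c with _ | c
  · simp
  · simpa using sum_ite_val_eq f c

end Fin

namespace LMatrix

section CommRing

variable {K : Type*} [CommRing K] {n : ℕ}

variable (K n) in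
def upperOnes : Matrix (Fin n) (Fin n) K := of fun i j => if i ≤ j then 1 else 0

variable (K n) in
def shift : Matrix (Fin n) (Fin n) K := of fun i j => if (i : ℕ) + 1 = j then 1 else 0

variable (n) in
def lMatrix (a : ℕ → K) : Matrix (Fin n) (Fin n) K := of fun i j => a (max (i : ℕ) j)

variable (n) in
def succDiff (a : ℕ → K) (k : ℕ) : K := a k - if k + 1 < n then a (k + 1) else 0

theorem succDiff_of_lt {a : ℕ → K} {k : ℕ} (h : k + 1 < n) :
    succDiff n a k = a k - a (k + 1) := by
  rw [succDiff, if_pos h]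

theorem succDiff_pred (a : ℕ → K) : succDiff n a (n - 1) = a (n - 1) := by
  rw [succDiff, if_neg (by omega), sub_zero]

theorem succDiff_ne_zero {a : ℕ → K} (ha : ∀ j : ℕ, 1 ≤ j → j ≤ n - 1 → a (j - 1) ≠ a j)
    (ha' : a (n - 1) ≠ 0) {k : ℕ} (hk : k < n) : succDiff n a k ≠ 0 := by
  rcases Nat.lt_or_ge (k + 1) n with hk' | hk'
  · rw [succDiff_of_lt hk', sub_ne_zero]
    simpa using ha (k + 1) (by omega) (by omega)
  · rwa [show k = n - 1 by omega, succDiff_pred]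

theorem shift_mul_upperOnes :
    shift K n * upperOnes K n = of fun i j => if i < j then 1 else 0 := by
  ext i j
  simp only [shift, upperOnes, mul_apply, of_apply, ite_mul, one_mul, zero_mul,
    eq_comm (a := (i : ℕ) + 1), Fin.le_def, Fin.lt_def]
  rw [Fin.sum_ite_val_eq (fun m => if m ≤ (j : ℕ) then 1 else 0)]
  split_ifs <;> first | rfl | omega

theorem upperOnes_mul_one_sub_shift : upperOnes K n * (1 - shift K n) = 1 := by
  rw [mul_eq_one_comm, sub_mul, one_mul, shift_mul_upperOnes]
  ext i j
  simp only [upperOnes, Matrix.sub_apply, of_apply, one_apply, Fin.ext_iff, Fin.le_def, Fin.lt_def]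
  split_ifs <;> first | omega | simp

theorem of_mul_one_sub_shift_transpose_apply (x : ℕ → ℕ → K) (i k : Fin n) :
    ((of fun i j : Fin n => x i j) * (1 - shift K n)ᵀ : Matrix (Fin n) (Fin n) K) i k =
      x i k - if (k : ℕ) + 1 < n then x i (k + 1) else 0 := by
  rw [transpose_sub, transpose_one, mul_sub, mul_one, Matrix.sub_apply, mul_apply]
  simp only [of_apply, transpose_apply, shift, mul_ite, mul_one, mul_zero,
    eq_comm (a := (k : ℕ) + 1)]
  rw [Fin.sum_ite_val_eq (fun m => x i m)]

theorem one_sub_shift_transpose_mul_of_apply (x : ℕ → ℕ → K) (j k : Fin n) :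
    ((1 - shift K n)ᵀ * of (fun i j : Fin n => x i j) : Matrix (Fin n) (Fin n) K) j k =
      x j k - if 0 < (j : ℕ) then x (j - 1) k else 0 := by
  rw [transpose_sub, transpose_one, sub_mul, one_mul, Matrix.sub_apply, mul_apply]
  simp only [of_apply, transpose_apply, shift, ite_mul, one_mul, zero_mul]
  rw [Fin.sum_ite_val_add_one_eq (fun m => x m k)]
  simp only [show (j : ℕ) - 1 < n by omega, and_true]

theorem lMatrix_mul_one_sub_shift_transpose (a : ℕ → K) :
    lMatrix n a * (1 - shift K n)ᵀ =
      upperOnes K n * diagonal (fun k : Fin n => succDiff n a k) := by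
  ext i k
  rw [lMatrix, of_mul_one_sub_shift_transpose_apply (fun i j => a (max i j)), mul_diagonal,
    upperOnes, of_apply, succDiff]
  rcases le_or_gt (i : ℕ) k with h | h
  · rw [if_pos (Fin.le_def.mpr h), max_eq_right h, max_eq_right (Nat.le_succ_of_le h), one_mul]
  · rw [if_neg (Fin.le_def.not.mpr h.not_ge), max_eq_left h.le, max_eq_left (Nat.succ_le_of_lt h),
      if_pos ((Nat.succ_le_of_lt h).trans_lt i.isLt), zero_mul, sub_self]

theorem diagonal_mul_one_sub_shift (e : ℕ → K) :
    diagonal (fun m : Fin n => e m) * (1 - shift K n) = of fun i k : Fin n =>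
      e i * ((if (i : ℕ) = k then 1 else 0) - if (i : ℕ) + 1 = k then 1 else 0) := by
  ext i k
  simp [diagonal_mul, shift, one_apply, Fin.ext_iff]

theorem one_sub_shift_transpose_mul_diagonal_mul_one_sub_shift_apply (e : ℕ → K) (j k : Fin n) :
    ((1 - shift K n)ᵀ * diagonal (fun m : Fin n => e m) * (1 - shift K n) :
      Matrix (Fin n) (Fin n) K) j k =
      if (j : ℕ) = k then e j + (if 0 < (j : ℕ) then e (j - 1) else 0)
      else if (j : ℕ) + 1 = k ∨ (k : ℕ) + 1 = j then -e (min (j : ℕ) k)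
      else 0 := by
  rw [mul_assoc, diagonal_mul_one_sub_shift, one_sub_shift_transpose_mul_of_apply
    (fun i k => e i * ((if i = k then 1 else 0) - if i + 1 = k then 1 else 0))]
  split_ifs <;> (try simp) <;> first | omega | (congr 1; omega)

end CommRing

section Field

variable {K : Type*} [Field K] {n : ℕ}

variable (n) in
def lMatrixInverse (a : ℕ → K) : Matrix (Fin n) (Fin n) K :=
  (1 - shift K n)ᵀ * diagonal (fun k : Fin n => (succDiff n a k)⁻¹) * (1 - shift K n)

theorem lMatrix_mul_lMatrixInverse {a : ℕ → K} (ha : ∀ k < n, succDiff n a k ≠ 0) :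
    lMatrix n a * lMatrixInverse n a = 1 := by
  have hdiag : diagonal (fun k : Fin n => succDiff n a k) *
      diagonal (fun k : Fin n => (succDiff n a k)⁻¹) = 1 := by
    rw [diagonal_mul_diagonal, ← diagonal_one]
    exact congrArg diagonal (funext fun k => mul_inv_cancel₀ (ha k k.isLt))
  rw [lMatrixInverse, ← mul_assoc, ← mul_assoc, lMatrix_mul_one_sub_shift_transpose,
    mul_assoc (upperOnes K n), hdiag, mul_one, upperOnes_mul_one_sub_shift]

theorem inv_succDiff_pred_add_inv_succDiff_pred_pred {a : ℕ → K} (hn : 2 ≤ n)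
    (ha : a (n - 2) ≠ a (n - 1)) (ha' : a (n - 1) ≠ 0) :
    (succDiff n a (n - 1))⁻¹ + (succDiff n a (n - 1 - 1))⁻¹ =
      a (n - 2) / a (n - 1) * (1 / (a (n - 2) - a (n - 1))) := by
  have hne : a (n - 2) - a (n - 1) ≠ 0 := sub_ne_zero.mpr ha
  rw [succDiff_pred, show n - 1 - 1 = n - 2 by omega, succDiff_of_lt (by omega),
    show n - 2 + 1 = n - 1 by omega]
  field_simp
  ring

theorem lMatrixInverse_apply {a : ℕ → K} (hn : 2 ≤ n) (ha : a (n - 2) ≠ a (n - 1))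
    (ha' : a (n - 1) ≠ 0) (i j : Fin n) :
    lMatrixInverse n a i j =
      let b : ℕ → K := fun k => 1 / (a k - a (k + 1))
      if (i : ℕ) = j then
        (if (i : ℕ) = 0 then b 0
         else if (i : ℕ) = n - 1 then (a (n - 2) / a (n - 1)) * b (n - 2)
         else b ((i : ℕ) - 1) + b (i : ℕ))
      else if (i : ℕ) + 1 = j ∨ (j : ℕ) + 1 = i then -(b (min (i : ℕ) (j : ℕ)))
      else 0 := by
  have hinv : ∀ k, k + 1 < n → (succDiff n a k)⁻¹ = 1 / (a k - a (k + 1)) := fun k hk => by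
    rw [succDiff_of_lt hk, one_div]
  rw [lMatrixInverse, one_sub_shift_transpose_mul_diagonal_mul_one_sub_shift_apply
    (fun k => (succDiff n a k)⁻¹)]
  have hi := i.isLt
  by_cases hij : (i : ℕ) = j
  · simp only [if_pos hij]
    by_cases h0 : (i : ℕ) = 0
    · simp [h0, hinv 0 (by omega)]
    by_cases hlast : (i : ℕ) = n - 1
    · rw [if_neg h0, if_pos hlast, if_pos (by omega), hlast,
        inv_succDiff_pred_add_inv_succDiff_pred_pred hn ha ha', show n - 2 + 1 = n - 1 by omega]
    · rw [if_neg h0, if_neg hlast, if_pos (by omega), hinv i (by omega),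
        hinv (i - 1) (by omega), add_comm]
  · simp only [if_neg hij]
    split_ifs
    · rw [hinv _ (by omega)]
    · rfl

end Field

end LMatrix

open LMatrix

/-- Let `n ≥ 2` and `a_0, …, a_{n−1}` be real numbers with consecutive values
distinct and `a_{n−1} ≠ 0`. Then the L-matrix `A_n` with entries `(A_n)_{i,j} = a_{max(i,j)}`
is invertible with tridiagonal inverse `T` given by `T_{0,0} = b_0`,
`T_{j,j} = b_{j−1} + b_j` for `1 ≤ j ≤ n−2`, `T_{n−1,n−1} = (a_{n−2}/a_{n−1}) b_{n−2}`,
`T_{j,j+1} = T_{j+1,j} = −b_j`, all other entries `0`, where `b_j = 1/(a_j − a_{j+1})`. -/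
theorem L_matrix_inverse (n : ℕ) (hn : 2 ≤ n) (a : ℕ → ℝ)
    (ha : ∀ j : ℕ, 1 ≤ j → j ≤ n - 1 → a (j - 1) ≠ a j) (ha' : a (n - 1) ≠ 0)
    (b : ℕ → ℝ) (hb : ∀ j, b j = 1 / (a j - a (j + 1)))
    (A T : Matrix (Fin n) (Fin n) ℝ)
    (hA : ∀ i j : Fin n, A i j = a (max (i : ℕ) (j : ℕ)))
    (hT : ∀ i j : Fin n, T i j =
      if (i : ℕ) = j then
        (if (i : ℕ) = 0 then b 0
         else if (i : ℕ) = n - 1 then (a (n - 2) / a (n - 1)) * b (n - 2)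
         else b ((i : ℕ) - 1) + b (i : ℕ))
      else if (i : ℕ) + 1 = j ∨ (j : ℕ) + 1 = i then -(b (min (i : ℕ) (j : ℕ)))
      else 0) :
    IsUnit A.det ∧ A⁻¹ = T := by
  obtain rfl : b = fun k => 1 / (a k - a (k + 1)) := funext hb
  have hlast : a (n - 2) ≠ a (n - 1) := by
    simpa [show n - 1 - 1 = n - 2 by omega] using ha (n - 1) (by omega) le_rfl
  have hAT : A * T = 1 := by
    rw [show A = lMatrix n a from Matrix.ext hA,
      show T = lMatrixInverse n a from
        Matrix.ext fun i j => (hT i j).trans (lMatrixInverse_apply hn hlast ha' i j).symm]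
    exact lMatrix_mul_lMatrixInverse fun k hk => succDiff_ne_zero ha ha' hk
  exact ⟨isUnit_det_of_right_inverse hAT, inv_eq_right_inv hAT⟩
end

section
/- Let n ≥ 2 and let a_0, a_1, …, a_n be real numbers with a_j ≠ a_{j+1} for all j ∈ {0,…,n−1}. Set b_j := 1/(a_j − a_{j+1}), and for m ∈ ℕ let B_m be the m×m symmetric tridiagonal (Jacobi) matrix with diagonal entries (B_m)_{0,0} = b_0, (B_m)_{j,j} = b_{j−1} + b_j for 1 ≤ j ≤ m−1, and off-diagonal entries (B_m)_{j,j+1} = (B_m)_{j+1,j} = −b_j for 0 ≤ j ≤ m−2. Then for every z ∈ ℂ, det(I − z A_n) = (−1)^n [ ∏_{j=1}^{n−1} (a_{j−1} − a_j) ] · [ a_{n−1} det(zI − B_n) + a_n b_{n−1} det(zI − B_{n−1}) ], where A_n is the n×n L-matrix with entries (A_n)_{i,j} = a_{max(i,j)}. -/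
/-!
Let `Δ` be the bidiagonal matrix `v ↦ (vᵢ - vᵢ₊₁)ᵢ`, so `det Δ = 1`. The congruent matrix
`Δ (1 - z Aₙ) Δᵀ` is tridiagonal, with off-diagonal entries `-1` and diagonal entries
`2 - z cᵢ`, where `cᵢ = aᵢ - aᵢ₊₁`, except for the last one, which is `1 - z aₙ₋₁`.
Let `Qₖ` be the leading `k × k` minors of the tridiagonal matrix with diagonal `2 - z cᵢ`.
Comparing the three-term recurrences of leading minors gives
`(-1)ᵏ c₀ ⋯ cₖ₋₁ det(z - Bₖ) = Qₖ - Qₖ₋₁` whenever `bᵢ cᵢ = 1`; both sides are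
`det(Δ Δᵀ - z diag c)`. The theorem is then a linear identity between `Qₙ`, `Qₙ₋₁` and `Qₙ₋₂`.
-/

open Finset

namespace Matrix

variable {R : Type*} [CommRing R]

def tridiag (d l u : ℕ → R) (m : ℕ) : Matrix (Fin m) (Fin m) R :=
  of fun i j =>
    if (i : ℕ) = j then d i
    else if (i : ℕ) + 1 = j then u i
    else if (j : ℕ) + 1 = i then l j
    else 0

lemma det_tridiag_zero (d l u : ℕ → R) : (tridiag d l u 0).det = 1 := det_fin_zero

lemma det_tridiag_one (d l u : ℕ → R) : (tridiag d l u 1).det = d 0 := by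
  simp [tridiag]

lemma det_tridiag_submatrix_castSucc_succAbove_last (d l u : ℕ → R) (m : ℕ) :
    ((tridiag d l u (m + 2)).submatrix Fin.castSucc (Fin.last m).castSucc.succAbove).det =
      u m * (tridiag d l u m).det := by
  set T := tridiag d l u (m + 2)
  rw [det_succ_column _ (Fin.last _), Fin.sum_univ_castSucc, sum_eq_zero fun i _ => ?_]
  · have hsub : T.submatrix (fun i : Fin m ↦ i.castSucc.castSucc)
        (fun j ↦ (Fin.last m).castSucc.succAbove j.castSucc) = tridiag d l u m := by
      ext i j
      rw [submatrix_apply, Fin.succAbove_castSucc_of_lt _ _ (Fin.castSucc_lt_last j)]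
      simp [T, tridiag]
    have hu : T (Fin.last m).castSucc (Fin.last (m + 1)) = u m := by
      simp only [T, tridiag, of_apply, Fin.val_castSucc, Fin.val_last]
      split_ifs <;> first | rfl | omega
    simp only [submatrix_apply, submatrix_submatrix, Function.comp_def, Fin.succAbove_last,
      Fin.succAbove_castSucc_self, Fin.succ_last, hu, hsub, Fin.val_last, zero_add]
    simp [Even.neg_one_pow ⟨m, rfl⟩]
  · have : T i.castSucc.castSucc (Fin.last (m + 1)) = 0 := by
      simp only [T, tridiag, of_apply, Fin.val_castSucc, Fin.val_last]
      split_ifs <;> first | rfl | omega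
    simp [this]

lemma det_tridiag_succ_succ (d l u : ℕ → R) (m : ℕ) :
    (tridiag d l u (m + 2)).det =
      d (m + 1) * (tridiag d l u (m + 1)).det - l m * u m * (tridiag d l u m).det := by
  have hminor := det_tridiag_submatrix_castSucc_succAbove_last d l u m
  set T := tridiag d l u (m + 2)
  have hcast : T.submatrix Fin.castSucc Fin.castSucc = tridiag d l u (m + 1) := by
    ext i j; simp [T, tridiag]
  have hd : T (Fin.last (m + 1)) (Fin.last (m + 1)) = d (m + 1) := by simp [T, tridiag]
  have hl : T (Fin.last (m + 1)) (Fin.last m).castSucc = l m := by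
    simp only [T, tridiag, of_apply, Fin.val_castSucc, Fin.val_last]
    split_ifs <;> first | rfl | omega
  rw [det_succ_row _ (Fin.last _), Fin.sum_univ_castSucc, Fin.sum_univ_castSucc,
    sum_eq_zero fun j _ => ?_]
  · simp only [Fin.succAbove_last, Fin.val_last, Fin.val_castSucc, hd, hl, hcast, hminor]
    rw [Odd.neg_one_pow ⟨m, by ring⟩, Even.neg_one_pow ⟨m + 1, rfl⟩]
    ring
  · have : T (Fin.last (m + 1)) j.castSucc.castSucc = 0 := by
      simp only [T, tridiag, of_apply, Fin.val_castSucc, Fin.val_last]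
      split_ifs <;> first | rfl | omega
    simp [this]

lemma tridiag_congr {d d' : ℕ → R} (l u : ℕ → R) {m : ℕ} (hd : ∀ i < m, d' i = d i) :
    tridiag d' l u m = tridiag d l u m := by
  ext i j
  simp only [tridiag, of_apply, hd i i.isLt]

lemma det_tridiag_succ_of_forall_lt_eq {d d' : ℕ → R} (l u : ℕ → R) {m : ℕ}
    (hd : ∀ i < m, d' i = d i) :
    (tridiag d' l u (m + 1)).det =
      (tridiag d l u (m + 1)).det + (d' m - d m) * (tridiag d l u m).det := by
  cases m with
  | zero => rw [det_tridiag_one, det_tridiag_one, det_tridiag_zero]; ring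
  | succ m =>
    rw [det_tridiag_succ_succ, det_tridiag_succ_succ, tridiag_congr l u hd,
      tridiag_congr l u fun i hi => hd i (by omega)]
    ring

lemma smul_one_sub_tridiag (c : R) (d l u : ℕ → R) (m : ℕ) :
    c • (1 : Matrix (Fin m) (Fin m) R) - tridiag d l u m =
      tridiag (fun i => c - d i) (fun i => -l i) (fun i => -u i) m := by
  ext i j
  rw [sub_apply, smul_apply, one_apply]
  simp only [tridiag, of_apply, Fin.ext_iff, smul_eq_mul]
  split_ifs <;> ring

def diffMatrix (n : ℕ) : Matrix (Fin n) (Fin n) R :=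
  of fun i j => if (j : ℕ) = i then 1 else if (j : ℕ) = i + 1 then -1 else 0

lemma det_diffMatrix (n : ℕ) : (diffMatrix n : Matrix (Fin n) (Fin n) R).det = 1 := by
  rw [det_of_isUpperTriangular]
  · simp [diffMatrix]
  · intro i j hij
    simp only [diffMatrix, of_apply]
    split_ifs <;> first | rfl | (simp at hij; omega)

lemma sum_diffMatrix_mul {n : ℕ} (g : ℕ → R) (i : Fin n) :
    ∑ k, diffMatrix n i k * g k = g i - if (i : ℕ) + 1 < n then g (i + 1) else 0 := by
  have hsplit : ∀ k : ℕ, (if k = i then 1 else if k = (i : ℕ) + 1 then -1 else 0) * g k =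
      (if k = i then g k else 0) - (if k = i + 1 then g k else 0) := by
    intro k; split_ifs <;> first | ring1 | (exfalso; omega)
  simp only [diffMatrix, of_apply]
  rw [Fin.sum_univ_eq_sum_range
      (fun k => (if k = i then 1 else if k = (i : ℕ) + 1 then -1 else 0) * g k),
    sum_congr rfl fun k _ => hsplit k, sum_sub_distrib, sum_ite_eq', sum_ite_eq',
    if_pos (mem_range.2 i.isLt)]
  simp only [mem_range]

lemma diffMatrix_mul_mul_transpose_apply {n : ℕ} (M : Matrix (Fin n) (Fin n) R)
    (f : ℕ → ℕ → R) (hM : ∀ i j : Fin n, M i j = f i j) (i j : Fin n) :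
    (diffMatrix n * M * (diffMatrix n)ᵀ : Matrix (Fin n) (Fin n) R) i j =
      f i j - (if (i : ℕ) + 1 < n then f (i + 1) j else 0) -
        if (j : ℕ) + 1 < n then f i (j + 1) - (if (i : ℕ) + 1 < n then f (i + 1) (j + 1) else 0)
        else 0 := by
  have hrow : ∀ k : Fin n, (diffMatrix n * M : Matrix (Fin n) (Fin n) R) i k =
      f i k - if (i : ℕ) + 1 < n then f (i + 1) k else 0 := fun k => by
    simp only [mul_apply, hM]; exact sum_diffMatrix_mul (fun l => f l k) i
  rw [mul_apply]
  simp only [transpose_apply, hrow, mul_comm _ (diffMatrix n j _)]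
  exact sum_diffMatrix_mul (fun k => f i k - if (i : ℕ) + 1 < n then f (i + 1) k else 0) j

def lMatrix (a : ℕ → R) (n : ℕ) : Matrix (Fin n) (Fin n) R := of fun i j => a (max i j)

lemma diffMatrix_mul_one_sub_smul_lMatrix_mul_transpose (a : ℕ → R) (n : ℕ) (z : R) :
    diffMatrix n * (1 - z • lMatrix a n) * (diffMatrix n)ᵀ =
      tridiag (fun i => if i + 1 = n then 1 - z * a i else 2 - z * (a i - a (i + 1)))
        (fun _ => -1) (fun _ => -1) n := by
  ext i j
  rw [diffMatrix_mul_mul_transpose_apply _ (fun i j => (if i = j then 1 else 0) - z * a (max i j))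
    fun i j => by simp [lMatrix, one_apply, Fin.ext_iff]]
  simp only [tridiag, of_apply]
  rcases lt_trichotomy (i : ℕ) j with h | h | h
  · rw [max_eq_right h.le, max_eq_right (by omega : (i : ℕ) + 1 ≤ j),
      max_eq_right (by omega : (i : ℕ) ≤ j + 1), max_eq_right (by omega : (i : ℕ) + 1 ≤ j + 1)]
    split_ifs <;> first | ring1 | (exfalso; omega)
  · rw [h, max_self, max_self, max_eq_left (by omega : (j : ℕ) + 1 ≥ j),
      max_eq_right (by omega : (j : ℕ) ≤ j + 1)]
    split_ifs <;> first | ring1 | (exfalso; omega)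
  · rw [max_eq_left h.le, max_eq_left (by omega : (i : ℕ) + 1 ≥ j),
      max_eq_left (by omega : (i : ℕ) ≥ j + 1), max_eq_left (by omega : (i : ℕ) + 1 ≥ j + 1)]
    split_ifs <;> first | ring1 | (exfalso; omega)

lemma det_one_sub_smul_lMatrix_eq_det_tridiag (a : ℕ → R) (n : ℕ) (z : R) :
    (1 - z • lMatrix a n).det =
      (tridiag (fun i => if i + 1 = n then 1 - z * a i else 2 - z * (a i - a (i + 1)))
        (fun _ => -1) (fun _ => -1) n).det := by
  rw [← diffMatrix_mul_one_sub_smul_lMatrix_mul_transpose, det_mul, det_mul, det_transpose,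
    det_diffMatrix, one_mul, mul_one]

def jacobi (b : ℕ → R) (m : ℕ) : Matrix (Fin m) (Fin m) R :=
  tridiag (fun i => if i = 0 then b 0 else b (i - 1) + b i) (fun i => -b i) (fun i => -b i) m

lemma det_smul_one_sub_jacobi_one (z : R) (b : ℕ → R) :
    (z • (1 : Matrix (Fin 1) (Fin 1) R) - jacobi b 1).det = z - b 0 := by
  rw [jacobi, smul_one_sub_tridiag, det_tridiag_one, if_pos rfl]

lemma det_smul_one_sub_jacobi_succ_succ (z : R) (b : ℕ → R) (k : ℕ) :
    (z • (1 : Matrix (Fin (k + 2)) (Fin (k + 2)) R) - jacobi b (k + 2)).det =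
      (z - (b k + b (k + 1))) * (z • (1 : Matrix _ _ R) - jacobi b (k + 1)).det -
        b k ^ 2 * (z • (1 : Matrix _ _ R) - jacobi b k).det := by
  simp only [jacobi, smul_one_sub_tridiag, det_tridiag_succ_succ, add_tsub_cancel_right,
    Nat.add_eq_zero_iff, one_ne_zero, and_false, if_false]
  ring

lemma neg_one_pow_mul_prod_mul_det_smul_one_sub_jacobi (z : R) (b c : ℕ → R) (k : ℕ)
    (hbc : ∀ i ≤ k, b i * c i = 1) :
    (-1) ^ (k + 1) * (∏ i ∈ range (k + 1), c i) *
        (z • (1 : Matrix (Fin (k + 1)) (Fin (k + 1)) R) - jacobi b (k + 1)).det =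
      (tridiag (fun i => 2 - z * c i) (fun _ => -1) (fun _ => -1) (k + 1)).det -
        (tridiag (fun i => 2 - z * c i) (fun _ => -1) (fun _ => -1) k).det := by
  induction k using Nat.twoStepInduction with
  | zero =>
    rw [det_smul_one_sub_jacobi_one, det_tridiag_one, det_tridiag_zero, prod_range_one]
    linear_combination hbc 0 le_rfl
  | one =>
    simp only [Nat.reduceAdd, det_smul_one_sub_jacobi_succ_succ, det_smul_one_sub_jacobi_one,
      det_tridiag_succ_succ, det_tridiag_one, prod_range_succ, prod_range_zero, det_fin_zero]
    linear_combination (-2 * z * c 1 + c 1 * b 1) * hbc 0 (by norm_num) +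
      (1 - z * c 0) * hbc 1 le_rfl
  | more k ih₁ ih₂ =>
    have h₁ := ih₁ fun i hi => hbc i (by omega)
    have h₂ := ih₂ fun i hi => hbc i (by omega)
    rw [det_smul_one_sub_jacobi_succ_succ z b (k + 1), det_tridiag_succ_succ _ _ _ (k + 1),
      prod_range_succ, prod_range_succ]
    rw [prod_range_succ] at h₂
    rw [det_tridiag_succ_succ _ _ _ k] at h₂ ⊢
    set Q₀ := (tridiag (fun i => 2 - z * c i) (fun _ => -1) (fun _ => -1) k).det
    set Q₁ := (tridiag (fun i => 2 - z * c i) (fun _ => -1) (fun _ => -1) (k + 1)).det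
    linear_combination (-c (k + 2) * (z - b (k + 1) - b (k + 2))) * h₂
      - c (k + 1) * c (k + 2) * b (k + 1) ^ 2 * h₁
      + ((1 - z * c (k + 1)) * Q₁ - Q₀) * hbc (k + 2) le_rfl
      - (c (k + 2) * b (k + 1) * (Q₁ - Q₀) + z * c (k + 2) * Q₁) * hbc (k + 1) (by omega)

theorem det_one_sub_smul_lMatrix_eq_jacobi (a b : ℕ → R) (z : R) (m : ℕ)
    (hab : ∀ i ≤ m + 1, b i * (a i - a (i + 1)) = 1) :
    (1 - z • lMatrix a (m + 2)).det =
      (-1) ^ (m + 2) * (∏ i ∈ range (m + 1), (a i - a (i + 1))) *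
        (a (m + 1) * (z • (1 : Matrix (Fin (m + 2)) (Fin (m + 2)) R) - jacobi b (m + 2)).det +
          a (m + 2) * b (m + 1) *
            (z • (1 : Matrix (Fin (m + 1)) (Fin (m + 1)) R) - jacobi b (m + 1)).det) := by
  set c : ℕ → R := fun i => a i - a (i + 1)
  have hL := det_one_sub_smul_lMatrix_eq_det_tridiag a (m + 2) z
  rw [det_tridiag_succ_of_forall_lt_eq (d := fun i => 2 - z * c i) _ _
    fun i hi => if_neg (by omega), if_pos rfl] at hL
  have hP₁ := neg_one_pow_mul_prod_mul_det_smul_one_sub_jacobi z b c (m + 1) hab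
  have hP₀ := neg_one_pow_mul_prod_mul_det_smul_one_sub_jacobi z b c m
    fun i hi => hab i (by omega)
  have hQ := det_tridiag_succ_succ (fun i => 2 - z * c i) (fun _ => -1) (fun _ => -1) m
  rw [prod_range_succ] at hP₁
  set D := (1 - z • lMatrix a (m + 2)).det
  set π := ∏ i ∈ range (m + 1), c i
  set p := (z • (1 : Matrix (Fin (m + 2)) (Fin (m + 2)) R) - jacobi b (m + 2)).det
  -- the identity holds after multiplying both sides by `b (m + 1) * c (m + 1) = 1`
  linear_combination b (m + 1) * c (m + 1) * hL - a (m + 1) * b (m + 1) * hP₁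
    + a (m + 2) * b (m + 1) * hP₀ - a (m + 2) * b (m + 1) * hQ
    + (a (m + 1) * (-1) ^ m * π * p - D) * hab (m + 1) le_rfl

end Matrix

open Matrix in
/-- Let `n ≥ 2` and `a_0, …, a_n` be real numbers with `a_j ≠ a_{j+1}`, and
set `b_j := 1/(a_j − a_{j+1})`. With `B_m` the `m×m` Jacobi matrix having diagonal
`(b_0, b_0+b_1, …, b_{m−2}+b_{m−1})` and sub/superdiagonal `−b_0, …, −b_{m−2}`, for every
`z ∈ ℂ`:
`det(1 − z A_n) = (−1)^n [∏_{j=1}^{n−1}(a_{j−1} − a_j)]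
                  · [a_{n−1} det(z − B_n) + a_n b_{n−1} det(z − B_{n−1})]`,
where `A_n` is the L-matrix with entries `a_{max(i,j)}`. -/
theorem L_matrix_charpoly_jacobi (n : ℕ) (hn : 2 ≤ n) (a : ℕ → ℝ)
    (ha : ∀ j : ℕ, j ≤ n - 1 → a j ≠ a (j + 1))
    (b : ℕ → ℝ) (hb : ∀ j, b j = 1 / (a j - a (j + 1)))
    (A : Matrix (Fin n) (Fin n) ℂ)
    (hA : ∀ i j : Fin n, A i j = (a (max (i : ℕ) (j : ℕ)) : ℂ))
    (B : (m : ℕ) → Matrix (Fin m) (Fin m) ℂ)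
    (hB : ∀ m : ℕ, ∀ i j : Fin m, B m i j =
      if (i : ℕ) = j then
        (if (i : ℕ) = 0 then (b 0 : ℂ) else (b ((i : ℕ) - 1) : ℂ) + (b (i : ℕ) : ℂ))
      else if (i : ℕ) + 1 = j ∨ (j : ℕ) + 1 = i then -((b (min (i : ℕ) (j : ℕ)) : ℝ) : ℂ)
      else 0)
    (z : ℂ) :
    (1 - z • A).det =
      (-1) ^ n * (∏ j ∈ Finset.Icc 1 (n - 1), ((a (j - 1) : ℂ) - (a j : ℂ)))
        * ((a (n - 1) : ℂ) * (z • (1 : Matrix (Fin n) (Fin n) ℂ) - B n).det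
            + (a n : ℂ) * (b (n - 1) : ℂ)
              * (z • (1 : Matrix (Fin (n - 1)) (Fin (n - 1)) ℂ) - B (n - 1)).det) := by
  obtain ⟨m, rfl⟩ : ∃ m, n = m + 2 := ⟨n - 2, by omega⟩
  rw [show m + 2 - 1 = m + 1 from rfl]
  set α : ℕ → ℂ := fun j => (a j : ℂ)
  set β : ℕ → ℂ := fun j => (b j : ℂ)
  have hαβ : ∀ i ≤ m + 1, β i * (α i - α (i + 1)) = 1 := fun i hi => by
    have hne : a i - a (i + 1) ≠ 0 := sub_ne_zero.2 (ha i (by omega))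
    simp only [β, α, hb i, ← Complex.ofReal_sub, ← Complex.ofReal_mul, one_div,
      inv_mul_cancel₀ hne, Complex.ofReal_one]
  have hAL : A = lMatrix α (m + 2) := Matrix.ext hA
  have hBJ : ∀ k, B k = jacobi β k := fun k => by
    ext i j
    rw [hB]
    simp only [jacobi, tridiag, of_apply]
    split_ifs <;> first | rfl | (exfalso; omega) | rw [min_eq_left (by omega)] |
      rw [min_eq_right (by omega)]
  have hprod :
      ∏ j ∈ Icc 1 (m + 1), (α (j - 1) - α j) = ∏ i ∈ range (m + 1), (α i - α (i + 1)) := by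
    rw [← Ico_add_one_right_eq_Icc, prod_Ico_eq_prod_range]
    simp [add_comm]
  rw [hAL, hBJ, hBJ, hprod]
  exact det_one_sub_smul_lMatrix_eq_jacobi α β z m hαβ
end

section
/- For every n ∈ ℕ and every real ν with ν ∉ {0,−1,−2,…}, all eigenvalues of L_n(ν) are simple, i.e., L_n(ν) has n pairwise distinct eigenvalues. Moreover, if ν > 0, then L_n(ν) is positive definite, so 0 < μ_{1,n}(ν) < μ_{2,n}(ν) < … < μ_{n,n}(ν). -/
/-!
Write `L_n(ν) = (f (max i j))` with `f k = 1 / (k + ν)`. Then `L = Sᵀ D S`, where `S` is the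
lower triangular all-ones matrix and `D = diag (f k - f (k + 1))`, with `f n` read as `0`. This
gives `det L ≠ 0`, and positive definiteness when `ν > 0`, since `f` is then positive and
decreasing. Subtracting consecutive rows of `L v = μ v` gives
`μ (v i - v (i + 1)) = (f i - f (i + 1)) (v 0 + ⋯ + v i)`, so for `μ ≠ 0` an eigenvector
vanishing at `0` vanishes identically: every eigenspace is a line.
-/

open Filter Matrix

/-- The generalized Hilbert L-matrix `L_n(ν)` with entries `1/(max(i,j)+ν)`. -/
noncomputable def Lmat (ν : ℝ) (n : ℕ) : Matrix (Fin n) (Fin n) ℝ :=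
  Matrix.of fun i j => 1 / ((max (i : ℕ) (j : ℕ) : ℝ) + ν)

theorem Lmat_isHermitian (ν : ℝ) (n : ℕ) : (Lmat ν n).IsHermitian := by
  unfold Matrix.IsHermitian
  ext i j
  simp [Lmat, Matrix.conjTranspose_apply, max_comm]

/-- The eigenvalues of `L_n(ν)` listed (with multiplicity) in nondecreasing order,
indexed by `Fin n` (so `evals ν n ⟨j-1,_⟩ = μ_{j,n}(ν)`). -/
noncomputable def evals (ν : ℝ) (n : ℕ) : Fin n → ℝ :=
  fun j => (Lmat_isHermitian ν n).eigenvalues (Tuple.sort ((Lmat_isHermitian ν n).eigenvalues) j)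

/-- `muL ν n j = μ_{j+1,n}(ν)`, the `(j+1)`-th smallest eigenvalue (0-based index `j`),
with junk value `0` when `j ≥ n`. -/
noncomputable def muL (ν : ℝ) (n : ℕ) (j : ℕ) : ℝ :=
  if h : j < n then evals ν n ⟨j, h⟩ else 0

section MaxMatrix

variable {R : Type*} [CommRing R]

def maxMatrix (f : ℕ → R) (n : ℕ) : Matrix (Fin n) (Fin n) R :=
  of fun i j => f (max (i : ℕ) j)

def lowerOnes (n : ℕ) : Matrix (Fin n) (Fin n) R :=
  of fun i j => if j ≤ i then 1 else 0

def maxWeight (f : ℕ → R) (n k : ℕ) : R :=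
  f k - if k + 1 < n then f (k + 1) else 0

theorem sum_Ico_maxWeight (f : ℕ → R) {m n : ℕ} (hm : m < n) :
    ∑ k ∈ Finset.Ico m n, maxWeight f n k = f m := by
  set g : ℕ → R := fun k => -if k < n then f k else 0
  have hg : ∀ k ∈ Finset.Ico m n, maxWeight f n k = g (k + 1) - g k := by
    intro k hk
    simp only [maxWeight, (Finset.mem_Ico.1 hk).2, ↓reduceIte, sub_neg_eq_add, g]
    ring
  rw [Finset.sum_congr rfl hg, Finset.sum_Ico_sub g hm.le]
  simp [g, hm]

theorem maxMatrix_eq_transpose_mul_diagonal_mul (f : ℕ → R) (n : ℕ) :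
    maxMatrix f n = (lowerOnes n)ᵀ * diagonal (fun k : Fin n => maxWeight f n k) * lowerOnes n := by
  ext i j
  have hsum : ∑ k : Fin n, (if max (i : ℕ) j ≤ k then maxWeight f n k else 0)
      = ∑ k ∈ Finset.Ico (max (i : ℕ) j) n, maxWeight f n k := by
    rw [Fin.sum_univ_eq_sum_range (fun k => if max (i : ℕ) j ≤ k then maxWeight f n k else 0),
      ← Finset.sum_filter]
    congr 1
    ext k
    simp only [sup_le_iff, Finset.mem_filter, Finset.mem_range, Finset.mem_Ico]
    omega
  rw [maxMatrix, of_apply, mul_apply]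
  simp only [mul_diagonal, transpose_apply, lowerOnes, of_apply]
  rw [← sum_Ico_maxWeight f (max_lt i.2 j.2), ← hsum]
  refine Finset.sum_congr rfl fun k _ => ?_
  simp only [max_le_iff, Fin.le_def]
  split_ifs <;> simp_all

theorem det_lowerOnes (n : ℕ) : (lowerOnes n : Matrix (Fin n) (Fin n) R).det = 1 := by
  rw [det_of_isLowerTriangular _ fun i j hij => ?_]
  · simp [lowerOnes]
  · simp [lowerOnes, (OrderDual.toDual_lt_toDual.1 hij).not_ge]

theorem det_maxMatrix (f : ℕ → R) (n : ℕ) :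
    (maxMatrix f n).det = ∏ k : Fin n, maxWeight f n k := by
  rw [maxMatrix_eq_transpose_mul_diagonal_mul, det_mul, det_mul, det_transpose, det_lowerOnes,
    det_diagonal, one_mul, mul_one]

theorem maxMatrix_mulVec_sub_mulVec (f : ℕ → R) {n : ℕ} (v : Fin n → R) {i j : Fin n}
    (hij : (j : ℕ) = i + 1) :
    (maxMatrix f n *ᵥ v) i - (maxMatrix f n *ᵥ v) j = (f i - f j) * ∑ l with l ≤ i, v l := by
  simp only [mulVec, dotProduct, maxMatrix, of_apply, ← Finset.sum_sub_distrib, ← sub_mul,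
    Finset.mul_sum, Finset.sum_filter]
  refine Finset.sum_congr rfl fun l _ => ?_
  rw [mul_ite, mul_zero]
  split_ifs with hl
  · rw [Fin.le_def] at hl
    rw [max_eq_left hl, max_eq_left (by omega)]
  · rw [Fin.le_def] at hl
    rw [max_eq_right (by omega), max_eq_right (by omega), sub_self, zero_mul]

theorem eq_zero_of_maxMatrix_mulVec_eq_smul [IsDomain R] {f : ℕ → R} {n : ℕ} {μ : R} (hμ : μ ≠ 0)
    {v : Fin n → R} (hv : maxMatrix f n *ᵥ v = μ • v) {i₀ : Fin n} (hi₀ : (i₀ : ℕ) = 0)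
    (h0 : v i₀ = 0) : v = 0 := by
  have key : ∀ m (j : Fin n), (j : ℕ) ≤ m → v j = 0 := by
    intro m
    induction m with
    | zero => intro j hj; rwa [Fin.ext ((Nat.le_zero.1 hj).trans hi₀.symm)]
    | succ m ih =>
      intro j hj
      rcases Nat.le_succ_iff.1 hj with hj | hj
      · exact ih j hj
      set i : Fin n := ⟨m, by omega⟩
      have hrow := maxMatrix_mulVec_sub_mulVec f v (i := i) (j := j) hj
      rw [hv, Finset.sum_eq_zero fun l hl => ih l (Fin.le_def.1 (Finset.mem_filter.1 hl).2),
        mul_zero, Pi.smul_apply, Pi.smul_apply, ih i le_rfl, smul_zero, zero_sub,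
        neg_eq_zero] at hrow
      exact (smul_eq_zero.1 hrow).resolve_left hμ
  funext j
  exact key j j le_rfl

theorem maxWeight_ne_zero [IsDomain R] {f : ℕ → R} (hf : ∀ k, f (k + 1) ≠ f k) {n k : ℕ}
    (hlast : f (n - 1) ≠ 0) (hk : k < n) : maxWeight f n k ≠ 0 := by
  unfold maxWeight
  split_ifs with hk'
  · exact sub_ne_zero.2 (hf k).symm
  · rwa [sub_zero, show k = n - 1 by omega]

theorem det_maxMatrix_ne_zero [IsDomain R] {f : ℕ → R} (hf : ∀ k, f (k + 1) ≠ f k) {n : ℕ}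
    (hlast : f (n - 1) ≠ 0) : (maxMatrix f n).det ≠ 0 := by
  rw [det_maxMatrix]
  exact Finset.prod_ne_zero_iff.2 fun k _ => maxWeight_ne_zero hf hlast k.2

theorem maxWeight_pos [PartialOrder R] [IsOrderedRing R] {f : ℕ → R} (hf : StrictAnti f)
    (hpos : ∀ k, 0 < f k) (n k : ℕ) : 0 < maxWeight f n k := by
  unfold maxWeight
  split_ifs
  · exact sub_pos.2 (hf k.lt_succ_self)
  · rw [sub_zero]
    exact hpos k

end MaxMatrix

theorem maxMatrix_posDef {f : ℕ → ℝ} {n : ℕ} (hw : ∀ k : Fin n, 0 < maxWeight f n k) :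
    (maxMatrix f n).PosDef := by
  have hS : Function.Injective (lowerOnes n : Matrix (Fin n) (Fin n) ℝ).mulVec :=
    mulVec_injective_iff_isUnit.2 ((isUnit_iff_isUnit_det _).2 (by simp [det_lowerOnes]))
  rw [maxMatrix_eq_transpose_mul_diagonal_mul, ← conjTranspose_eq_transpose_of_trivial]
  exact (posDef_diagonal_iff.2 hw).conjTranspose_mul_mul_same hS

theorem Matrix.IsHermitian.eigenvalues_injective_of_eigenvector_apply_eq_zero {𝕜 ι : Type*}
    [RCLike 𝕜] [Fintype ι] [DecidableEq ι] {A : Matrix ι ι 𝕜} (hA : A.IsHermitian) (i₀ : ι)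
    (h : ∀ (μ : ℝ) (v : ι → 𝕜), A *ᵥ v = μ • v → v i₀ = 0 → v = 0) :
    Function.Injective hA.eigenvalues := by
  intro i j hij
  by_contra hne
  have hAi := hA.mulVec_eigenvectorBasis i
  have hAj := hA.mulVec_eigenvectorBasis j
  set b := hA.eigenvectorBasis
  set z := b j i₀ • b i - b i i₀ • b j
  have hz : A *ᵥ ⇑z = hA.eigenvalues i • ⇑z := by
    simp only [z, WithLp.ofLp_sub, WithLp.ofLp_smul, mulVec_sub, mulVec_smul, hAi, hAj, hij]
    module
  have hz0 : z = 0 := WithLp.ofLp_injective 2 (h _ _ hz (by simp [z, mul_comm]))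
  have hbi : b i i₀ = 0 := by
    simpa [z, inner_sub_right, inner_smul_right, b.inner_eq_ite, Ne.symm hne] using
      congr_arg (inner 𝕜 (b j)) hz0
  exact b.orthonormal.ne_zero i (WithLp.ofLp_injective 2 (h _ _ hAi hbi))

theorem Lmat_eq_maxMatrix (ν : ℝ) (n : ℕ) :
    Lmat ν n = maxMatrix (fun k : ℕ => 1 / ((k : ℝ) + ν)) n := by
  ext i j
  simp [Lmat, maxMatrix]

theorem Lmat_eigenvalues_injective {ν : ℝ} (hν : ∀ k : ℕ, ν ≠ -(k : ℝ)) (n : ℕ) :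
    Function.Injective (Lmat_isHermitian ν n).eigenvalues := by
  cases n with
  | zero => exact Function.injective_of_subsingleton _
  | succ n =>
    have hf : ∀ k : ℕ, 1 / (((k + 1 : ℕ) : ℝ) + ν) ≠ 1 / ((k : ℝ) + ν) := by
      intro k h
      simp at h
    have hlast : 1 / (((n + 1 - 1 : ℕ) : ℝ) + ν) ≠ 0 :=
      one_div_ne_zero fun h => hν n (by simp at h; linarith)
    refine (Lmat_isHermitian ν _).eigenvalues_injective_of_eigenvector_apply_eq_zero 0
      fun μ v hv hv₀ => ?_
    rw [Lmat_eq_maxMatrix] at hv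
    rcases eq_or_ne μ 0 with rfl | hμ
    · exact eq_zero_of_mulVec_eq_zero (det_maxMatrix_ne_zero hf hlast)
        (hv.trans (zero_smul ℝ v))
    · exact eq_zero_of_maxMatrix_mulVec_eq_smul hμ hv rfl hv₀

theorem Lmat_posDef {ν : ℝ} (hν : 0 < ν) (n : ℕ) : (Lmat ν n).PosDef := by
  rw [Lmat_eq_maxMatrix]
  have hanti : StrictAnti fun k : ℕ => 1 / ((k : ℝ) + ν) :=
    strictAnti_nat_of_succ_lt fun k => by gcongr; simp
  exact maxMatrix_posDef fun k => maxWeight_pos hanti (fun k => by positivity) _ _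

/-- For every `n` and every real `ν ∉ {0,−1,−2,…}`, the eigenvalues of
`L_n(ν)` are simple (the nondecreasing listing of eigenvalues is injective, i.e. the `n`
eigenvalues are pairwise distinct). Moreover, if `ν > 0` then `L_n(ν)` is positive definite
and `0 < μ_{1,n}(ν) < μ_{2,n}(ν) < … < μ_{n,n}(ν)`. -/
theorem hilbert_L_matrix_eigenvalues_simple
    (n : ℕ) (ν : ℝ) (hν : ∀ k : ℕ, ν ≠ -(k : ℝ)) :
    Function.Injective (evals ν n) ∧
      (0 < ν → (Lmat ν n).PosDef ∧ StrictMono (evals ν n) ∧ ∀ j : Fin n, 0 < evals ν n j) := by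
  have hinj : Function.Injective (evals ν n) :=
    (Lmat_eigenvalues_injective hν n).comp (Equiv.injective _)
  refine ⟨hinj, fun hν₀ => ?_⟩
  have hpd := Lmat_posDef hν₀ n
  exact ⟨hpd, (Tuple.monotone_sort _).strictMono_of_injective hinj, fun j => hpd.eigenvalues_pos _⟩
end

section
/- For every n ∈ ℕ, the eigenvalues of the Hilbert L-matrix L_n are simple and satisfy 0 < μ_{1,n} < μ_{2,n} < … < μ_{n,n} < 4; in particular 4 is not an eigenvalue of L_n for any n. -/
open Filter Matrix

/-!
With partial sums `A m = x 0 + ⋯ + x (m - 1)`, the quadratic form of `L_n` equals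
`∑_{k<n} A (k+1)² / ((k+1)(k+2)) + A n² / (n+1)`, which is positive for `x ≠ 0`, and an inductive
form of Hardy's inequality bounds it by `4 ‖x‖² - 2 ∑_k x k² / (k+1) < 4 ‖x‖²`; so the eigenvalues
lie in `(0, 4)`. Row `i` of `L_n` is constant, equal to `1/(i+1)`, up to the diagonal, so back
substitution shows that an eigenvector for a nonzero eigenvalue vanishing in the last coordinate
vanishes identically; hence every eigenspace is a line.
-/

open Finset

theorem Matrix.IsHermitian.eigenvalues_mem_of_rayleigh_mem {ι : Type*} [Fintype ι]
    [DecidableEq ι] {A : Matrix ι ι ℝ} (hA : A.IsHermitian) {s : Set ℝ}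
    (h : ∀ v ≠ 0, v ⬝ᵥ (A *ᵥ v) / (v ⬝ᵥ v) ∈ s) (i : ι) : hA.eigenvalues i ∈ s := by
  set b := hA.eigenvectorBasis i
  have hb : ⇑b ⬝ᵥ ⇑b = 1 := by
    have := real_inner_self_eq_norm_sq b
    rw [hA.eigenvectorBasis.orthonormal.1 i, one_pow,
      EuclideanSpace.inner_eq_star_dotProduct] at this
    simpa using this
  have hb0 : ⇑b ≠ 0 := fun h0 => by simp [h0] at hb
  simpa [hA.eigenvalues_eq i, hb] using h b hb0

/-- Two orthonormal eigenvectors for one eigenvalue would combine to a nonzero eigenvector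
vanishing at `k`. -/
theorem Matrix.IsHermitian.eigenvalues_injective_of_apply_eq_zero {𝕜 ι : Type*} [RCLike 𝕜]
    [Fintype ι] [DecidableEq ι] {A : Matrix ι ι 𝕜} (hA : A.IsHermitian) (k : ι)
    (h : ∀ i (v : ι → 𝕜), A *ᵥ v = hA.eigenvalues i • v → v k = 0 → v = 0) :
    Function.Injective hA.eigenvalues := by
  intro i j hij
  by_contra hne
  set b := hA.eigenvectorBasis
  have hv : A *ᵥ ⇑(b i) = hA.eigenvalues i • ⇑(b i) := hA.mulVec_eigenvectorBasis i
  have hw : A *ᵥ ⇑(b j) = hA.eigenvalues i • ⇑(b j) := hij ▸ hA.mulVec_eigenvectorBasis j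
  have hcomb : b i k • b j = b j k • b i := by
    refine WithLp.ofLp_injective 2 (sub_eq_zero.mp (h i _ ?_ ?_))
    · rw [WithLp.ofLp_smul, WithLp.ofLp_smul, mulVec_sub, mulVec_smul, mulVec_smul, hv, hw,
        smul_sub, smul_comm (b i k), smul_comm (b j k)]
    · simp only [Pi.sub_apply, Pi.smul_apply, WithLp.ofLp_smul, smul_eq_mul, mul_comm, sub_self]
  have hik : b i k = 0 := by
    simpa [inner_smul_right, b.inner_eq_one, b.orthonormal.2 (Ne.symm hne)] using
      congrArg (inner 𝕜 (b j)) hcomb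
  exact b.orthonormal.ne_zero i (WithLp.ofLp_injective 2 (h i _ hv hik))

noncomputable def hilbertLForm (x : ℕ → ℝ) (n : ℕ) : ℝ :=
  ∑ i ∈ range n, ∑ j ∈ range n, x i * x j / (((max i j : ℕ) : ℝ) + 1)

section HilbertLForm

variable (x : ℕ → ℝ)

theorem hilbertLForm_succ (n : ℕ) :
    hilbertLForm x (n + 1) = hilbertLForm x n
      + ((∑ i ∈ range (n + 1), x i) ^ 2 - (∑ i ∈ range n, x i) ^ 2) / (n + 1) := by
  have hrow : ∀ i ∈ range n, x i * x n / (((max i n : ℕ) : ℝ) + 1) = x i * x n / (n + 1) :=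
    fun i hi => by rw [max_eq_right (mem_range.mp hi).le]
  have hcol : ∀ j ∈ range n, x n * x j / (((max n j : ℕ) : ℝ) + 1) = x n * x j / (n + 1) :=
    fun j hj => by rw [max_eq_left (mem_range.mp hj).le]
  simp only [hilbertLForm, sum_range_succ, sum_add_distrib, sum_congr rfl hrow,
    sum_congr rfl hcol, max_self, ← sum_div, ← sum_mul, ← mul_sum]
  field_simp
  ring

theorem hilbertLForm_eq_sum_sq (n : ℕ) :
    hilbertLForm x n = ∑ k ∈ range n, (∑ i ∈ range (k + 1), x i) ^ 2 / ((k + 1) * (k + 2))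
      + (∑ i ∈ range n, x i) ^ 2 / (n + 1) := by
  induction n with
  | zero => simp [hilbertLForm]
  | succ n ih =>
    rw [hilbertLForm_succ, ih,
      sum_range_succ (fun k : ℕ => (∑ i ∈ range (k + 1), x i) ^ 2 / ((k + 1) * (k + 2))) n]
    push_cast
    field_simp
    ring

theorem hilbertLForm_pos {n : ℕ} (h : ∃ k < n, x k ≠ 0) : 0 < hilbertLForm x n := by
  obtain ⟨k, hkn, hk⟩ := h
  rw [hilbertLForm_eq_sum_sq]
  suffices ∃ m ∈ range n, 0 < (∑ i ∈ range (m + 1), x i) ^ 2 / ((m + 1) * (m + 2)) by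
    have : 0 < ∑ m ∈ range n, (∑ i ∈ range (m + 1), x i) ^ 2 / ((m + 1) * (m + 2)) :=
      sum_pos' (fun _ _ => by positivity) this
    positivity
  -- `x k` is the difference of two consecutive partial sums, so one of them is nonzero.
  by_cases hsucc : ∑ i ∈ range (k + 1), x i = 0
  · obtain ⟨m, rfl⟩ : ∃ m, k = m + 1 := Nat.exists_eq_succ_of_ne_zero fun hk0 => by
      simp_all
    have hm : ∑ i ∈ range (m + 1), x i ≠ 0 := fun hm => hk (by
      rw [sum_range_succ, hm] at hsucc
      linarith)
    exact ⟨m, mem_range.mpr (by omega), by positivity⟩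
  · exact ⟨k, mem_range.mpr hkn, by positivity⟩

/-- A finite form of Hardy's inequality, with the remainder terms that make the induction close. -/
theorem hilbertLForm_add_le (n : ℕ) :
    hilbertLForm x n + (∑ i ∈ range n, x i) ^ 2 / n + 2 * ∑ k ∈ range n, x k ^ 2 / (k + 1)
      ≤ 4 * ∑ k ∈ range n, x k ^ 2 := by
  induction n with
  | zero => simp [hilbertLForm]
  | succ n ih =>
    rw [hilbertLForm_succ, sum_range_succ, sum_range_succ (fun k => x k ^ 2 / (k + 1)),
      sum_range_succ (fun k => x k ^ 2)]
    push_cast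
    set S := ∑ i ∈ range n, x i
    rcases n.eq_zero_or_pos with rfl | hn
    · simp [S]
      linarith
    have hstep : (S + x n) ^ 2 / (n + 1) - S ^ 2 / n
        + ((S + x n) ^ 2 - S ^ 2) / (n + 1) + 2 * (x n ^ 2 / (n + 1))
        = 4 * x n ^ 2 - (S - 2 * n * x n) ^ 2 / (n * (n + 1)) := by
      field_simp
      ring
    have : 0 ≤ (S - 2 * n * x n) ^ 2 / (n * (n + 1)) := by positivity
    linarith

theorem hilbertLForm_lt {n : ℕ} (h : ∃ k < n, x k ≠ 0) :
    hilbertLForm x n < 4 * ∑ k ∈ range n, x k ^ 2 := by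
  obtain ⟨k, hkn, hk⟩ := h
  have hpos : 0 < ∑ k ∈ range n, x k ^ 2 / (k + 1) :=
    sum_pos' (fun _ _ => by positivity) ⟨k, mem_range.mpr hkn, by positivity⟩
  have := hilbertLForm_add_le x n
  have : 0 ≤ (∑ i ∈ range n, x i) ^ 2 / n := by positivity
  linarith

end HilbertLForm

theorem Lmat_one_dotProduct_mulVec (x : ℕ → ℝ) (n : ℕ) :
    (fun i : Fin n => x i) ⬝ᵥ (Lmat 1 n *ᵥ fun i => x i) = hilbertLForm x n := by
  simp only [dotProduct, mulVec, Lmat, of_apply, mul_sum, hilbertLForm]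
  rw [← Fin.sum_univ_eq_sum_range (fun i => ∑ j ∈ range n, _)]
  refine sum_congr rfl fun i _ => ?_
  rw [← Fin.sum_univ_eq_sum_range (fun j => x i * x j / (((max (i : ℕ) j : ℕ) : ℝ) + 1))]
  refine sum_congr rfl fun j _ => ?_
  push_cast
  ring

theorem Lmat_one_rayleigh_mem_Ioo {n : ℕ} {v : Fin n → ℝ} (hv : v ≠ 0) :
    v ⬝ᵥ (Lmat 1 n *ᵥ v) / (v ⬝ᵥ v) ∈ Set.Ioo 0 4 := by
  obtain ⟨x, rfl⟩ : ∃ x : ℕ → ℝ, (fun i : Fin n => x i) = v :=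
    ⟨fun i => if h : i < n then v ⟨i, h⟩ else 0, by simp⟩
  have hx : ∃ k < n, x k ≠ 0 := by
    obtain ⟨k, hk⟩ := Function.ne_iff.mp hv
    exact ⟨k, k.isLt, hk⟩
  have hsq : (fun i : Fin n => x i) ⬝ᵥ (fun i : Fin n => x i) = ∑ k ∈ range n, x k ^ 2 := by
    simp only [dotProduct, ← sq]
    exact Fin.sum_univ_eq_sum_range (fun k => x k ^ 2) n
  have hsq_pos : 0 < ∑ k ∈ range n, x k ^ 2 := by
    obtain ⟨k, hkn, hk⟩ := hx
    exact sum_pos' (fun _ _ => sq_nonneg _) ⟨k, mem_range.mpr hkn, by positivity⟩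
  rw [Lmat_one_dotProduct_mulVec, hsq, Set.mem_Ioo, div_lt_iff₀ hsq_pos]
  exact ⟨div_pos (hilbertLForm_pos x hx) hsq_pos, hilbertLForm_lt x hx⟩

theorem Lmat_one_mulVec_apply_of_forall_lt {n : ℕ} {v : Fin n → ℝ} {i : Fin n}
    (hv : ∀ j, i < j → v j = 0) : (Lmat 1 n *ᵥ v) i = (∑ j, v j) / (i + 1) := by
  simp only [mulVec, dotProduct, Lmat, of_apply, sum_div]
  refine sum_congr rfl fun j _ => ?_
  rcases le_or_gt j i with hji | hij
  · rw [max_eq_left (Nat.cast_le.mpr hji), one_div_mul_eq_div]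
  · simp [hv j hij]

/-- Back substitution: the last row forces `∑ v = 0`, and then the row of the last nonzero
coordinate of `v` forces that coordinate to vanish. -/
theorem Lmat_one_eq_zero_of_mulVec_eq_smul {n : ℕ} {μ : ℝ} (hμ : μ ≠ 0) {v : Fin (n + 1) → ℝ}
    (hv : Lmat 1 (n + 1) *ᵥ v = μ • v) (hlast : v (Fin.last n) = 0) : v = 0 := by
  have hsum : ∑ j, v j = 0 := by
    have hrow := congrFun hv (Fin.last n)
    rw [Lmat_one_mulVec_apply_of_forall_lt fun j hj => absurd hj (Fin.le_last j).not_gt,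
      Pi.smul_apply, hlast, smul_zero, div_eq_zero_iff] at hrow
    exact hrow.resolve_right (by positivity)
  by_contra hne
  set S := univ.filter (v · ≠ 0)
  have hS : S.Nonempty := by
    obtain ⟨j, hj⟩ := Function.ne_iff.mp hne
    exact ⟨j, by simpa [S] using hj⟩
  have hi : v (S.max' hS) ≠ 0 := (mem_filter.mp (S.max'_mem hS)).2
  have hgt : ∀ j, S.max' hS < j → v j = 0 := fun j hj => by
    by_contra h
    exact (S.le_max' j (by simpa [S] using h)).not_gt hj
  have hrow := congrFun hv (S.max' hS)
  rw [Lmat_one_mulVec_apply_of_forall_lt hgt, hsum, zero_div, Pi.smul_apply, smul_eq_mul] at hrow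
  exact hi ((mul_eq_zero.mp hrow.symm).resolve_left hμ)

theorem Lmat_one_eigenvalues_mem_Ioo (n : ℕ) (i : Fin n) :
    (Lmat_isHermitian 1 n).eigenvalues i ∈ Set.Ioo 0 4 :=
  (Lmat_isHermitian 1 n).eigenvalues_mem_of_rayleigh_mem
    (fun _ hv => Lmat_one_rayleigh_mem_Ioo hv) i

theorem Lmat_one_eigenvalues_injective (n : ℕ) :
    Function.Injective (Lmat_isHermitian 1 n).eigenvalues := by
  cases n with
  | zero => exact Function.injective_of_subsingleton _
  | succ n =>
    refine (Lmat_isHermitian 1 (n + 1)).eigenvalues_injective_of_apply_eq_zero (Fin.last n)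
      fun i v hv hlast => Lmat_one_eq_zero_of_mulVec_eq_smul ?_ hv hlast
    exact (Lmat_one_eigenvalues_mem_Ioo (n + 1) i).1.ne'

/-- For every `n`, the eigenvalues of the Hilbert L-matrix `L_n = L_n(1)`
are simple and satisfy `0 < μ_{1,n} < μ_{2,n} < … < μ_{n,n} < 4`; in particular `4` is not
an eigenvalue of `L_n`. -/
theorem hilbert_L_matrix_eigenvalues_in_0_4 (n : ℕ) :
    StrictMono (evals 1 n) ∧ (∀ j : Fin n, 0 < evals 1 n j ∧ evals 1 n j < 4) := by
  have hsorted : Monotone (evals 1 n) := Tuple.monotone_sort (Lmat_isHermitian 1 n).eigenvalues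
  have hinj : Function.Injective (evals 1 n) :=
    (Lmat_one_eigenvalues_injective n).comp (Tuple.sort _).injective
  exact ⟨hsorted.strictMono_of_injective hinj, fun j => Lmat_one_eigenvalues_mem_Ioo n _⟩
end

section
/- Define p_n(z) := det(I − z L_n) for n ∈ ℕ and z ∈ ℂ. Then for every integer n ≥ 2 and every z ∈ ℂ, the three-term recurrence (n+1)² p_{n+1}(z) + ( z − 2n² − 2n − 1 ) p_n(z) + n² p_{n−1}(z) = 0 holds. -/
/-- The Hilbert L-matrix `L_n = L_n(1)` as a complex matrix, entries `1/(max(i,j)+1)`. -/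
noncomputable def LmatC (n : ℕ) : Matrix (Fin n) (Fin n) ℂ :=
  Matrix.of fun i j => 1 / (((max (i : ℕ) (j : ℕ) : ℕ) : ℂ) + 1)

/-- `p_n(z) := det(1 − z L_n)`. -/
noncomputable def pChar (n : ℕ) (z : ℂ) : ℂ := (1 - z • LmatC n).det

/-!
`L_n` has a tridiagonal inverse `T_n`: its off-diagonal entries are `-k(k+1)` at `(k-1, k)`,
its diagonal entries `2(k+1)²`, except the last one, which is `n²`. Since `det T_n = (n!)²`,
`p_n(z) (n!)² = det (T_n - z) =: D_n(z)`. Let `E_n(z)` be the same determinant with the last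
diagonal entry `2n² - z` instead of `n² - z`. Expanding along the last row gives
`E_n = D_n + n² E_{n-1}` and `D_{n+1} = (n+1)² D_n - z E_n`, and eliminating `E` leaves the
three-term recurrence for `D_n`, which is the one for `p_n`.
-/

open Finset
open scoped Nat

namespace Matrix

variable {R : Type*} [CommRing R]

/-- The entry at `(k - 1, k)` and `(k, k - 1)` is `c k`, so `c 0` never occurs. -/
def symmTridiagonal (a c : ℕ → R) (n : ℕ) : Matrix (Fin n) (Fin n) R :=
  of fun i j => if (i : ℕ) = j then a i else if (i : ℕ) + 1 = j then c j
    else if (j : ℕ) + 1 = i then c i else 0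

theorem symmTridiagonal_congr_diag {a a' : ℕ → R} (c : ℕ → R) {n : ℕ}
    (h : ∀ k < n, a k = a' k) : symmTridiagonal a c n = symmTridiagonal a' c n := by
  ext i j
  simp only [symmTridiagonal, of_apply]
  split_ifs <;> simp [h i i.isLt]

theorem symmTridiagonal_sub_smul_one (a c : ℕ → R) (n : ℕ) (z : R) :
    symmTridiagonal a c n - z • 1 = symmTridiagonal (fun k => a k - z) c n := by
  ext i j
  simp only [symmTridiagonal, sub_apply, smul_apply, one_apply, of_apply, Fin.ext_iff,
    smul_eq_mul]
  split_ifs <;> simp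

theorem symmTridiagonal_submatrix_castSucc (a c : ℕ → R) (n : ℕ) :
    (symmTridiagonal a c (n + 1)).submatrix Fin.castSucc Fin.castSucc =
      symmTridiagonal a c n := by
  ext i j
  simp [symmTridiagonal]

theorem sum_symmTridiagonal_mul (a c f : ℕ → R) (hc : c 0 = 0) {n : ℕ} (i : Fin n) :
    ∑ k : Fin n, symmTridiagonal a c n i k * f k =
      c i * f (i - 1) + a i * f i + if (i : ℕ) + 1 < n then c (i + 1) * f (i + 1) else 0 := by
  obtain ⟨i, hi⟩ := i
  have h_split (k : ℕ) : (if i = k then a i else if i + 1 = k then c k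
      else if k + 1 = i then c i else 0) * f k =
      (if k + 1 = i then c i * f k else 0) + (if k = i then a i * f k else 0) +
        (if k = i + 1 then c k * f k else 0) := by
    split_ifs <;> first | omega | simp
  have h_below : ∑ k ∈ range n, (if k + 1 = i then c i * f k else 0) = c i * f (i - 1) := by
    rcases i with _ | m
    · simp [hc]
    · simp [show m < n by omega]
  simp only [symmTridiagonal, of_apply]
  rw [Fin.sum_univ_eq_sum_range (fun k => (if i = k then a i else if i + 1 = k then c k
    else if k + 1 = i then c i else 0) * f k)]
  simp only [h_split, sum_add_distrib, h_below, sum_ite_eq', mem_range, hi, if_true]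

theorem det_symmTridiagonal_succ_succ (a c : ℕ → R) (n : ℕ) :
    (symmTridiagonal a c (n + 2)).det =
      a (n + 1) * (symmTridiagonal a c (n + 1)).det -
        c (n + 1) ^ 2 * (symmTridiagonal a c n).det := by
  set A := symmTridiagonal a c (n + 2)
  have h_row (j : Fin n) : A (Fin.last _) j.castSucc.castSucc = 0 := by
    have := j.isLt
    simp only [A, symmTridiagonal, of_apply, Fin.val_last, Fin.val_castSucc]
    rw [if_neg (by omega), if_neg (by omega), if_neg (by omega)]
  have h_col (i : Fin n) : A i.castSucc.castSucc (Fin.last _) = 0 := by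
    have := i.isLt
    simp only [A, symmTridiagonal, of_apply, Fin.val_last, Fin.val_castSucc]
    rw [if_neg (by omega), if_neg (by omega), if_neg (by omega)]
  have h_sub : A (Fin.last _) (Fin.last n).castSucc = c (n + 1) := by
    simp [A, symmTridiagonal, show n + 1 + 1 ≠ n by omega]
  have h_super : A (Fin.last n).castSucc (Fin.last _) = c (n + 1) := by
    simp [A, symmTridiagonal]
  have h_diag : A (Fin.last _) (Fin.last _) = a (n + 1) := by simp [A, symmTridiagonal]
  have h_minor : (A.submatrix Fin.castSucc (Fin.last n).castSucc.succAbove).det =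
      c (n + 1) * (symmTridiagonal a c n).det := by
    rw [det_succ_column _ (Fin.last n), Fin.sum_univ_castSucc]
    simp only [submatrix_apply, Fin.succAbove_castSucc_self, Fin.succ_last, h_col, h_super,
      mul_zero, zero_mul, sum_const_zero, zero_add, Fin.val_last, ← two_mul, pow_mul, neg_one_sq,
      one_pow, one_mul, Fin.succAbove_last, submatrix_submatrix]
    congr 2
    ext i j
    simp [A, symmTridiagonal, Fin.succAbove_castSucc_of_lt _ _ (Fin.castSucc_lt_last j)]
  rw [det_succ_row A (Fin.last _), Fin.sum_univ_castSucc, Fin.sum_univ_castSucc]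
  simp only [h_row, mul_zero, zero_mul, sum_const_zero, zero_add, h_sub, h_diag, h_minor,
    Fin.succAbove_last, Fin.val_last, Fin.val_castSucc, A, symmTridiagonal_submatrix_castSucc]
  rw [Odd.neg_one_pow ⟨n, by ring⟩, Even.neg_one_pow ⟨n + 1, rfl⟩]
  ring

theorem det_symmTridiagonal_succ_of_forall_lt {a a' : ℕ → R} (c : ℕ → R) {n : ℕ}
    (h : ∀ k < n, a k = a' k) :
    (symmTridiagonal a' c (n + 1)).det =
      (symmTridiagonal a c (n + 1)).det + (a' n - a n) * (symmTridiagonal a c n).det := by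
  rcases n with _ | n
  · simp [symmTridiagonal]
  · rw [det_symmTridiagonal_succ_succ, det_symmTridiagonal_succ_succ,
      symmTridiagonal_congr_diag c h, symmTridiagonal_congr_diag c (fun k hk => h k (by omega))]
    ring

end Matrix

open Matrix

namespace LmatC

def invOffDiag (k : ℕ) : ℂ := -((k : ℂ) * (k + 1))

def invBulkDiag (k : ℕ) : ℂ := 2 * ((k : ℂ) + 1) ^ 2

def invDiag (n k : ℕ) : ℂ := if k + 1 = n then (n : ℂ) ^ 2 else invBulkDiag k

def inv (n : ℕ) : Matrix (Fin n) (Fin n) ℂ := symmTridiagonal (invDiag n) invOffDiag n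

theorem inv_mul (n : ℕ) : inv n * LmatC n = 1 := by
  ext i j
  have h_row := sum_symmTridiagonal_mul (invDiag n) invOffDiag
    (fun k => 1 / (((max k (j : ℕ) : ℕ) : ℂ) + 1)) (by simp [invOffDiag]) i
  rw [mul_apply]
  simp only [LmatC, of_apply, one_apply]
  rw [inv, h_row]
  obtain ⟨i, hi⟩ := i
  obtain ⟨j, hj⟩ := j
  simp only [invDiag, invOffDiag, invBulkDiag, Fin.mk.injEq]
  rcases (show i + 1 = n ∨ i + 1 < n by omega) with hlast | hint
  · simp only [hlast, if_true, lt_irrefl, if_false, add_zero]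
    rcases (show j < i ∨ j = i by omega) with hji | rfl
    · obtain ⟨m, rfl⟩ : ∃ m, i = m + 1 := ⟨i - 1, by omega⟩
      rw [if_neg hji.ne', max_eq_left (by omega), max_eq_left hji.le, Nat.add_sub_cancel,
        ← hlast]
      have : (m : ℂ) + 1 + 1 ≠ 0 := by norm_cast
      push_cast; field_simp; ring
    · rw [if_pos rfl, max_eq_right (by omega), max_self, ← hlast]
      push_cast; field_simp; ring
  · simp only [hint.ne, hint, if_true, if_false]
    rcases lt_trichotomy j i with hji | rfl | hij
    · obtain ⟨m, rfl⟩ : ∃ m, i = m + 1 := ⟨i - 1, by omega⟩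
      rw [if_neg hji.ne', max_eq_left (by omega), max_eq_left hji.le, max_eq_left (by omega),
        Nat.add_sub_cancel]
      have : (m : ℂ) + 1 + 1 ≠ 0 := by norm_cast
      have : (m : ℂ) + 1 + 1 + 1 ≠ 0 := by norm_cast
      push_cast; field_simp; ring
    · rw [if_pos rfl, max_eq_right (by omega), max_self, max_eq_left (by omega)]
      have : (j : ℂ) + 1 + 1 ≠ 0 := by norm_cast
      push_cast; field_simp; ring
    · rw [if_neg hij.ne, max_eq_right (by omega), max_eq_right hij.le, max_eq_right hij]
      push_cast; field_simp; ring

theorem mul_inv (n : ℕ) : LmatC n * inv n = 1 := mul_eq_one_comm.mp (inv_mul n)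

def invCharDet (n : ℕ) (z : ℂ) : ℂ := (inv n - z • 1).det

def bulkCharDet (n : ℕ) (z : ℂ) : ℂ :=
  (symmTridiagonal (fun k => invBulkDiag k - z) invOffDiag n).det

theorem invCharDet_succ_eq_bulkCharDet (n : ℕ) (z : ℂ) :
    invCharDet (n + 1) z = bulkCharDet (n + 1) z - ((n : ℂ) + 1) ^ 2 * bulkCharDet n z := by
  have h_bulk (k : ℕ) (hk : k < n) : invBulkDiag k - z = invDiag (n + 1) k - z := by
    rw [invDiag, if_neg (by omega)]
  rw [invCharDet, inv, symmTridiagonal_sub_smul_one,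
    det_symmTridiagonal_succ_of_forall_lt invOffDiag h_bulk, bulkCharDet, bulkCharDet, invDiag,
    if_pos rfl, invBulkDiag]
  push_cast
  ring

theorem invCharDet_succ (n : ℕ) (z : ℂ) :
    invCharDet (n + 1) z = ((n : ℂ) + 1) ^ 2 * invCharDet n z - z * bulkCharDet n z := by
  rcases n with _ | m
  · simp [invCharDet, bulkCharDet, inv, symmTridiagonal, invDiag]
  · have h_bulk := det_symmTridiagonal_succ_succ (fun k => invBulkDiag k - z) invOffDiag m
    rw [← bulkCharDet, ← bulkCharDet, ← bulkCharDet] at h_bulk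
    rw [invCharDet_succ_eq_bulkCharDet, invCharDet_succ_eq_bulkCharDet, h_bulk]
    simp only [invBulkDiag, invOffDiag]
    push_cast
    ring

theorem invCharDet_zero_right (n : ℕ) : invCharDet n 0 = (n ! : ℂ) ^ 2 := by
  induction n with
  | zero => simp [invCharDet]
  | succ n ih =>
    rw [invCharDet_succ, ih, Nat.factorial_succ]
    push_cast
    ring

theorem invCharDet_recurrence (n : ℕ) (z : ℂ) :
    invCharDet (n + 1) z + (z - 2 * (n : ℂ) ^ 2 - 2 * n - 1) * invCharDet n z
      + (n : ℂ) ^ 4 * invCharDet (n - 1) z = 0 := by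
  rcases n with _ | m
  · have h_empty : invCharDet 0 z = bulkCharDet 0 z := by
      simp only [invCharDet, bulkCharDet, det_fin_zero]
    have h_succ := invCharDet_succ 0 z
    push_cast at *
    linear_combination h_succ + z * h_empty
  · have h_succ := invCharDet_succ (m + 1) z
    have h_bulk := invCharDet_succ_eq_bulkCharDet m z
    have h_prev := invCharDet_succ m z
    simp only [Nat.add_sub_cancel]
    push_cast at *
    linear_combination h_succ + z * h_bulk - ((m : ℂ) + 1) ^ 2 * h_prev

end LmatC

theorem pChar_mul_factorial_sq (n : ℕ) (z : ℂ) :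
    pChar n z * (n ! : ℂ) ^ 2 = LmatC.invCharDet n z := by
  rw [pChar, ← LmatC.invCharDet_zero_right, LmatC.invCharDet, zero_smul, sub_zero, ← det_mul,
    sub_mul, one_mul, smul_mul_assoc, LmatC.mul_inv, LmatC.invCharDet]

theorem hilbert_L_matrix_charpoly_recurrence_general (n : ℕ) (z : ℂ) :
    ((n : ℂ) + 1) ^ 2 * pChar (n + 1) z
      + (z - 2 * (n : ℂ) ^ 2 - 2 * (n : ℂ) - 1) * pChar n z
      + (n : ℂ) ^ 2 * pChar (n - 1) z = 0 := by
  have h_fact : (n ! : ℂ) ^ 2 ≠ 0 := pow_ne_zero _ (Nat.cast_ne_zero.mpr n.factorial_ne_zero)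
  have h_pred : (n : ℂ) ^ 2 * (n ! : ℂ) ^ 2 = n ^ 4 * ((n - 1)! : ℂ) ^ 2 := by
    rcases n with _ | m
    · simp
    · simp [Nat.factorial_succ]
      ring
  have h_succ := pChar_mul_factorial_sq (n + 1) z
  rw [Nat.factorial_succ] at h_succ
  push_cast at h_succ
  refine mul_left_injective₀ h_fact ?_
  linear_combination h_succ + (z - 2 * (n : ℂ) ^ 2 - 2 * n - 1) * pChar_mul_factorial_sq n z
    + (n : ℂ) ^ 4 * pChar_mul_factorial_sq (n - 1) z + LmatC.invCharDet_recurrence n z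
    + pChar (n - 1) z * h_pred

/-- For every `n ≥ 2` and `z ∈ ℂ`, the polynomials `p_n(z) = det(1 − z L_n)`
satisfy the three-term recurrence
`(n+1)² p_{n+1}(z) + (z − 2n² − 2n − 1) p_n(z) + n² p_{n−1}(z) = 0`. -/
theorem hilbert_L_matrix_charpoly_recurrence (n : ℕ) (hn : 2 ≤ n) (z : ℂ) :
    ((n : ℂ) + 1) ^ 2 * pChar (n + 1) z
      + (z - 2 * (n : ℂ) ^ 2 - 2 * (n : ℂ) - 1) * pChar n z
      + (n : ℂ) ^ 2 * pChar (n - 1) z = 0 :=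
  hilbert_L_matrix_charpoly_recurrence_general n z
end

section
/- Let b_0, b_1, b_2, … be real numbers and define polynomials Q_m by Q_0(x) = 1, Q_1(x) = x, and Q_{m+1}(x) = x Q_m(x) − b_{⌊(m−1)/2⌋} Q_{m−1}(x) for m ≥ 1. Let B_n be the n×n symmetric tridiagonal Jacobi matrix with diagonal entries (B_n)_{0,0} = b_0, (B_n)_{j,j} = b_{j−1}+b_j for 1 ≤ j ≤ n−1, and off-diagonal entries (B_n)_{j,j+1} = (B_n)_{j+1,j} = −b_j for 0 ≤ j ≤ n−2. Then for every n ∈ ℕ and every x, Q_{2n}(x) = det( x² I_n − B_n ). -/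
/-- The `m×m` symmetric tridiagonal Jacobi matrix with diagonal
`(b_0, b_0+b_1, …, b_{m−2}+b_{m−1})` and sub/superdiagonal entries `−b_0, …, −b_{m−2}`. -/
noncomputable def jacobiMat (b : ℕ → ℝ) (m : ℕ) : Matrix (Fin m) (Fin m) ℝ :=
  Matrix.of fun i j =>
    if (i : ℕ) = (j : ℕ) then
      (if (i : ℕ) = 0 then b 0 else b ((i : ℕ) - 1) + b (i : ℕ))
    else if (i : ℕ) + 1 = (j : ℕ) ∨ (j : ℕ) + 1 = (i : ℕ) then
      -(b (min (i : ℕ) (j : ℕ)))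
    else 0


/-- The polynomials `Q_0(x)=1`, `Q_1(x)=x`,
`Q_{m+1}(x) = x Q_m(x) − b_{⌊(m−1)/2⌋} Q_{m−1}(x)` for `m ≥ 1`. -/
noncomputable def Qpoly (b : ℕ → ℝ) : ℕ → ℝ → ℝ
  | 0 => fun _ => 1
  | 1 => fun x => x
  | (m + 2) => fun x => x * Qpoly b (m + 1) x - b (m / 2) * Qpoly b m x


/-! Writing `D_n = det (x² I_n − B_n)`, expansion along the last row shows that a tridiagonal
determinant satisfies `D_{n+2} = (x² − b_n − b_{n+1}) D_{n+1} − b_n² D_n`. Eliminating the odd-index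
polynomials from the recurrence for `Q` gives the same recurrence for `Q_{2n}`, and both sequences
start with `1` and `x² − b_0`. -/

section Tridiagonal

variable {R : Type*} [CommRing R] (d e f : ℕ → R)

def tridiagonal (m : ℕ) : Matrix (Fin m) (Fin m) R :=
  Matrix.of fun i j =>
    if (i : ℕ) = j then d i
    else if (i : ℕ) + 1 = j then e i
    else if (j : ℕ) + 1 = i then f j
    else 0

@[simp]
theorem tridiagonal_submatrix_castSucc (m : ℕ) :
    (tridiagonal d e f (m + 1)).submatrix Fin.castSucc Fin.castSucc = tridiagonal d e f m := by
  ext i j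
  simp [tridiagonal]

theorem det_tridiagonal_submatrix_castSucc_succAbove (m : ℕ) :
    ((tridiagonal d e f (m + 2)).submatrix Fin.castSucc (Fin.last m).castSucc.succAbove).det =
      e m * (tridiagonal d e f m).det := by
  set N := (tridiagonal d e f (m + 2)).submatrix Fin.castSucc (Fin.last m).castSucc.succAbove
  have h_col : (Fin.last m).castSucc.succAbove (Fin.last m) = Fin.last (m + 1) := by
    rw [Fin.succAbove_castSucc_self, Fin.succ_last]
  have h_far (i : Fin m) : N i.castSucc (Fin.last m) = 0 := by
    simp only [N, tridiagonal, Matrix.submatrix_apply, h_col, Matrix.of_apply, Fin.val_castSucc,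
      Fin.val_last]
    rw [if_neg (by omega), if_neg (by omega), if_neg (by omega)]
  have h_super : N (Fin.last m) (Fin.last m) = e m := by
    simp only [N, tridiagonal, Matrix.submatrix_apply, h_col, Matrix.of_apply, Fin.val_castSucc,
      Fin.val_last]
    rw [if_neg (by omega), if_pos trivial]
  have h_minor : N.submatrix Fin.castSucc Fin.castSucc = tridiagonal d e f m := by
    ext i j
    simp only [N, Matrix.submatrix_apply,
      Fin.succAbove_castSucc_of_lt _ _ (Fin.castSucc_lt_last j)]
    simp [tridiagonal]
  rw [Matrix.det_succ_column N (Fin.last m), Fin.sum_univ_castSucc]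
  simp only [h_far, h_super, Fin.succAbove_last, h_minor, mul_zero, zero_mul,
    Finset.sum_const_zero, zero_add, Fin.val_last]
  rw [(Even.neg_one_pow ⟨m, rfl⟩ : (-1 : R) ^ (m + m) = 1), one_mul]

theorem det_tridiagonal_succ_succ (m : ℕ) :
    (tridiagonal d e f (m + 2)).det =
      d (m + 1) * (tridiagonal d e f (m + 1)).det - e m * f m * (tridiagonal d e f m).det := by
  have h_far (j : Fin m) :
      tridiagonal d e f (m + 2) (Fin.last (m + 1)) j.castSucc.castSucc = 0 := by
    simp only [tridiagonal, Matrix.of_apply, Fin.val_castSucc, Fin.val_last]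
    rw [if_neg (by omega), if_neg (by omega), if_neg (by omega)]
  have h_sub : tridiagonal d e f (m + 2) (Fin.last (m + 1)) (Fin.last m).castSucc = f m := by
    simp only [tridiagonal, Matrix.of_apply, Fin.val_castSucc, Fin.val_last]
    rw [if_neg (by omega), if_neg (by omega), if_pos trivial]
  have h_diag : tridiagonal d e f (m + 2) (Fin.last (m + 1)) (Fin.last (m + 1)) = d (m + 1) := by
    simp [tridiagonal]
  rw [Matrix.det_succ_row _ (Fin.last (m + 1)), Fin.sum_univ_castSucc, Fin.sum_univ_castSucc]
  simp only [h_far, h_sub, h_diag, mul_zero, zero_mul, Finset.sum_const_zero, zero_add,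
    Fin.succAbove_last, tridiagonal_submatrix_castSucc, det_tridiagonal_submatrix_castSucc_succAbove,
    Fin.val_castSucc, Fin.val_last]
  rw [(Odd.neg_one_pow ⟨m, by ring⟩ : (-1 : R) ^ (m + 1 + m) = -1),
    (Even.neg_one_pow ⟨m + 1, rfl⟩ : (-1 : R) ^ (m + 1 + (m + 1)) = 1)]
  ring

end Tridiagonal

theorem sub_jacobiMat_eq_tridiagonal (b : ℕ → ℝ) (x : ℝ) (m : ℕ) :
    x ^ 2 • (1 : Matrix (Fin m) (Fin m) ℝ) - jacobiMat b m =
      tridiagonal (fun i => x ^ 2 - if i = 0 then b 0 else b (i - 1) + b i) b b m := by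
  ext i j
  simp only [jacobiMat, tridiagonal, Matrix.sub_apply, Matrix.smul_apply, Matrix.one_apply,
    Matrix.of_apply, smul_eq_mul, Fin.ext_iff, Nat.min_def]
  split_ifs <;> first | omega | ring1

theorem Qpoly_two_mul_add_two (b : ℕ → ℝ) (n : ℕ) (x : ℝ) :
    Qpoly b (2 * (n + 2)) x =
      (x ^ 2 - (b n + b (n + 1))) * Qpoly b (2 * (n + 1)) x - b n ^ 2 * Qpoly b (2 * n) x := by
  have step (m : ℕ) : Qpoly b (m + 2) x = x * Qpoly b (m + 1) x - b (m / 2) * Qpoly b m x := rfl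
  have h₄ :
      Qpoly b (2 * n + 4) x = x * Qpoly b (2 * n + 3) x - b (n + 1) * Qpoly b (2 * n + 2) x := by
    rw [step (2 * n + 2), show (2 * n + 2) / 2 = n + 1 by omega]
  have h₃ : Qpoly b (2 * n + 3) x = x * Qpoly b (2 * n + 2) x - b n * Qpoly b (2 * n + 1) x := by
    rw [step (2 * n + 1), show (2 * n + 1) / 2 = n by omega]
  have h₂ : Qpoly b (2 * n + 2) x = x * Qpoly b (2 * n + 1) x - b n * Qpoly b (2 * n) x := by
    rw [step (2 * n), show 2 * n / 2 = n by omega]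
  rw [show 2 * (n + 2) = 2 * n + 4 by ring, show 2 * (n + 1) = 2 * n + 2 by ring]
  linear_combination h₄ + x * h₃ + b n * h₂

/-- For every `n` and every `x`, `Q_{2n}(x) = det(x² I_n − B_n)`, where
`B_n` is the Jacobi matrix built from the sequence `b`. -/
theorem Qpoly_even_eq_det (b : ℕ → ℝ) (n : ℕ) (x : ℝ) :
    Qpoly b (2 * n) x =
      (x ^ 2 • (1 : Matrix (Fin n) (Fin n) ℝ) - jacobiMat b n).det := by
  rw [sub_jacobiMat_eq_tridiagonal]
  induction n using Nat.twoStepInduction with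
  | zero => simp [Qpoly]
  | one => simp [Qpoly, tridiagonal]; ring
  | more n ih₀ ih₁ =>
    rw [Qpoly_two_mul_add_two, det_tridiagonal_succ_succ, ih₀, ih₁]
    simp only [Nat.add_eq_zero_iff, one_ne_zero, and_false, if_false, Nat.add_sub_cancel]
    ring
end

section
/- For n ∈ ℕ, index matrices by i,j ∈ {1,…,n} and define: the Hilbert L-matrix L̃_n with entries (L̃_n)_{i,j} = 1/max(i,j) (which coincides with L_n(1) up to reindexing); the Cesàro matrix C_n with (C_n)_{i,j} = 1/i if j ≤ i and 0 otherwise; and the matrix M_n with (M_n)_{i,j} = Σ_{l=max(i,j)}^{n} 1/l². Then C_n is invertible and L̃_n = C_n M_n C_n^{−1}, i.e., L̃_n C_n = C_n M_n; consequently L̃_n and M_n have the same eigenvalues. -/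
/-!
The Cesàro matrix factors both sides: `L̃_n = C_n C_nᵀ`, since `Σ_{k ≤ min(i,j)} 1/(ij) =
min(i,j)/(ij) = 1/max(i,j)`, and `M_n = C_nᵀ C_n`, which is the identity
`Σ_k ((x_1+…+x_k)/k)² = ‖C_n x‖²`. Hence `L̃_n C_n = C_n C_nᵀ C_n = C_n M_n`, and
`C_n C_nᵀ`, `C_nᵀ C_n` have the same characteristic polynomial. `C_n` is lower triangular with
diagonal `1/i ≠ 0`, so it is invertible.
-/

/-- The Hilbert L-matrix with 1-based entries `1/max(i,j)`, `i,j ∈ {1,…,n}`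
(indexed here by `Fin n`, with index `i` standing for `i+1`). -/
noncomputable def Ltil (n : ℕ) : Matrix (Fin n) (Fin n) ℝ :=
  Matrix.of fun i j => 1 / ((max ((i : ℕ) + 1) ((j : ℕ) + 1) : ℕ) : ℝ)

/-- The Cesàro matrix `(C_n)_{i,j} = 1/i` for `1 ≤ j ≤ i ≤ n`, `0` otherwise. -/
noncomputable def cesaro (n : ℕ) : Matrix (Fin n) (Fin n) ℝ :=
  Matrix.of fun i j => if (j : ℕ) ≤ (i : ℕ) then 1 / ((i : ℕ) + 1 : ℝ) else 0

/-- The Hardy-form matrix `(M_n)_{i,j} = Σ_{l=max(i,j)}^{n} 1/l²`. -/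
noncomputable def hardyMat (n : ℕ) : Matrix (Fin n) (Fin n) ℝ :=
  Matrix.of fun i j =>
    ∑ l ∈ Finset.Icc (max ((i : ℕ) + 1) ((j : ℕ) + 1)) n, 1 / ((l : ℕ) : ℝ) ^ 2

open Finset Matrix

theorem Fin.sum_ite_le_eq_sum_Icc {M : Type*} [AddCommMonoid M] (n a : ℕ) (f : ℕ → M) :
    ∑ l : Fin n, (if a ≤ (l : ℕ) then f (l + 1) else 0) = ∑ l ∈ Icc (a + 1) n, f l := by
  rw [Fin.sum_univ_eq_sum_range (fun l => if a ≤ l then f (l + 1) else 0), ← sum_filter,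
    ← Ico_add_one_right_eq_Icc, ← sum_Ico_add' f]
  congr 1
  ext l
  simp only [mem_filter, mem_range, mem_Ico]
  omega

theorem Fin.sum_ite_le_const {M : Type*} [AddCommMonoid M] {n m : ℕ} (hm : m < n) (c : M) :
    ∑ k : Fin n, (if (k : ℕ) ≤ m then c else 0) = (m + 1) • c := by
  rw [Fin.sum_univ_eq_sum_range (fun k => if k ≤ m then c else 0), sum_ite, sum_const_zero,
    add_zero, Finset.sum_const]
  have hfilter : (range n).filter (· ≤ m) = range (m + 1) := by
    ext k
    simp only [mem_filter, mem_range]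
    omega
  rw [hfilter, card_range]

theorem hardyMat_eq_transpose_mul_cesaro (n : ℕ) : hardyMat n = (cesaro n)ᵀ * cesaro n := by
  ext i j
  simp only [hardyMat, cesaro, mul_apply, transpose_apply, of_apply, Nat.add_max_add_right]
  rw [← Fin.sum_ite_le_eq_sum_Icc _ _ fun l : ℕ => 1 / (l : ℝ) ^ 2]
  refine sum_congr rfl fun l _ => ?_
  simp only [max_le_iff, ite_mul, mul_ite, zero_mul, mul_zero, ite_and]
  push_cast
  split_ifs <;> field_simp

theorem Ltil_eq_cesaro_mul_transpose (n : ℕ) : Ltil n = cesaro n * (cesaro n)ᵀ := by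
  ext i j
  simp only [Ltil, cesaro, mul_apply, transpose_apply, of_apply, ite_mul, mul_ite, zero_mul,
    mul_zero, ← ite_and, ← le_min_iff]
  rw [Fin.sum_ite_le_const (m := min (j : ℕ) i) (lt_of_le_of_lt (min_le_left _ _) j.isLt),
    nsmul_eq_mul]
  rcases le_total (i : ℕ) j with h | h
  · rw [min_eq_right h, max_eq_right (by omega)]
    push_cast
    field_simp
  · rw [min_eq_left h, max_eq_left (by omega)]
    push_cast
    field_simp

theorem cesaro_det_ne_zero (n : ℕ) : (cesaro n).det ≠ 0 := by
  have h : (cesaro n).IsLowerTriangular := fun i j (hij : i < j) => if_neg hij.not_ge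
  rw [det_of_isLowerTriangular _ h, prod_ne_zero_iff]
  intro i _
  simp only [cesaro, of_apply, le_rfl, if_true]
  positivity

/-- The Cesàro matrix `C_n` is invertible, `L̃_n = C_n M_n C_n^{−1}` (i.e.
`L̃_n C_n = C_n M_n`), and consequently `L̃_n` and `M_n` have the same eigenvalues (equal
characteristic polynomials). -/
theorem hilbert_L_matrix_similar_hardy (n : ℕ) :
    IsUnit (cesaro n).det ∧
      Ltil n * cesaro n = cesaro n * hardyMat n ∧
      Ltil n = cesaro n * hardyMat n * (cesaro n)⁻¹ ∧
      (Ltil n).charpoly = (hardyMat n).charpoly := by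
  have hdet : IsUnit (cesaro n).det := (cesaro_det_ne_zero n).isUnit
  have hmul : Ltil n * cesaro n = cesaro n * hardyMat n := by
    rw [Ltil_eq_cesaro_mul_transpose, hardyMat_eq_transpose_mul_cesaro, Matrix.mul_assoc]
  refine ⟨hdet, hmul, ?_, ?_⟩
  · rw [← hmul, Matrix.mul_assoc, mul_nonsing_inv _ hdet, Matrix.mul_one]
  · rw [Ltil_eq_cesaro_mul_transpose, hardyMat_eq_transpose_mul_cesaro, charpoly_mul_comm]
end
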